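/- Let P ∈ F[x_1,…,x_n] be a nonzero polynomial computed by a pseudo-simple minimal low degree unmixed ΣΠΣΠ(k) circuit C = F_1 + … + F_k of size s (s ≥ 2, k ≥ 2) over a sufficiently large (e.g. infinite) field F. Let G: F^m → F^n be a polynomial map that is a generator both for the class of nonzero polynomials computed by low degree unmixed ΣΠΣΠ(t) circuits of size s with t ≤ k−1 and for the class of nonzero low degree 2s-sparse polynomials. Then there exist a point c ∈ Im(G) and an integer 0 ≤ t ≤ n−1 such that P' := P|_{x_1=c_1,…,x_t=c_t} is nonzero and ‖P'‖ ≤ s^(5k²+2). -/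

import Mathlib

open MvPolynomial Finset

attribute [local instance 10] Classical.propDecidable

/-- Embed a univariate polynomial as a multivariate polynomial in the variable `x j`. -/
noncomputable def toMv {F : Type*} [CommSemiring F] {n : ℕ} (j : Fin n) (f : Polynomial F) :
    MvPolynomial (Fin n) F :=
  Polynomial.aeval (X j) f

/-- The sparsity `‖P‖`: the number of monomials of `P` with nonzero coefficient. -/
def sparsity {F : Type*} [CommSemiring F] {n : ℕ} (P : MvPolynomial (Fin n) F) : ℕ :=
  P.support.card

/-- `‖P‖_A`: the number of distinct exponent vectors of monomials of `P` after setting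
the exponents of the variables indexed by `A` to zero. -/
noncomputable def sparsityOn {F : Type*} [CommSemiring F] {n : ℕ} (A : Finset (Fin n))
    (P : MvPolynomial (Fin n) F) : ℕ :=
  (P.support.image fun m => Finsupp.filter (fun j => j ∉ A) m).card

/-- Substitute `c` for the variable `x i`. -/
noncomputable def substAt {F : Type*} [CommSemiring F] {n : ℕ} (i : Fin n) (c : F)
    (P : MvPolynomial (Fin n) F) : MvPolynomial (Fin n) F :=
  aeval (fun j : Fin n => if j = i then MvPolynomial.C c else X j) P

/-- Substitute `a j` for `x j` for all `j < t` (for `t = 0` this is `P` itself). -/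
noncomputable def substPrefix {F : Type*} [CommSemiring F] {n : ℕ} (t : ℕ) (a : Fin n → F)
    (P : MvPolynomial (Fin n) F) : MvPolynomial (Fin n) F :=
  aeval (fun j : Fin n => if (j : ℕ) < t then MvPolynomial.C (a j) else X j) P

/-- The operator `D_{x i = c}(P, Q) = P·(Q|_{x i = c}) − (P|_{x i = c})·Q`. -/
noncomputable def Dop {F : Type*} [CommRing F] {n : ℕ} (i : Fin n) (c : F)
    (P Q : MvPolynomial (Fin n) F) : MvPolynomial (Fin n) F :=
  P * substAt i c Q - substAt i c P * Q

/-- `f` (a univariate polynomial, placed in the variable `x i`) is an indecomposable factor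
of `Q`: `Q = f(x i) · H` with `H` not depending on `x i`. -/
def IsIndecompFactor {F : Type*} [CommSemiring F] {n : ℕ} (i : Fin n) (f : Polynomial F)
    (Q : MvPolynomial (Fin n) F) : Prop :=
  ∃ H : MvPolynomial (Fin n) F, Q = toMv i f * H ∧ i ∉ H.vars

/-- The set `S 1 ∩ ⋯ ∩ S k` where `S i = {g i 1 (x 1), …, g i n (x n)}`. -/
noncomputable def commonFactors {F : Type*} [CommSemiring F] {n k : ℕ}
    (g : Fin k → Fin n → Polynomial F) : Finset (MvPolynomial (Fin n) F) :=
  (Finset.univ.image fun x : Fin k × Fin n => toMv x.2 (g x.1 x.2)).filter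
    fun p => ∀ i : Fin k, ∃ j : Fin n, toMv j (g i j) = p

/-- The pseudo greatest common divisor: the product of the polynomials in `S 1 ∩ ⋯ ∩ S k`. -/
noncomputable def pseudoGcd {F : Type*} [CommSemiring F] {n k : ℕ}
    (g : Fin k → Fin n → Polynomial F) : MvPolynomial (Fin n) F :=
  ∏ p ∈ commonFactors g, p

section Aux
variable {F : Type*} [Field F] {n : ℕ}

lemma toMv_eq_sum (j : Fin n) (f : Polynomial F) :
    toMv j f = ∑ d ∈ f.support, MvPolynomial.C (f.coeff d) * X j ^ d := by
  rw [toMv, Polynomial.aeval_def, Polynomial.eval₂_eq_sum, Polynomial.sum_def]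
  exact Finset.sum_congr rfl fun d _ => by rw [MvPolynomial.algebraMap_eq]

lemma toMv_support_subset (j : Fin n) (f : Polynomial F) :
    (toMv j f).support ⊆ f.support.image fun d => Finsupp.single j d := by
  classical
  rw [toMv_eq_sum]
  refine MvPolynomial.support_sum.trans ?_
  intro mm hm
  rw [Finset.mem_biUnion] at hm
  obtain ⟨d, hd, hmd⟩ := hm
  rw [MvPolynomial.C_mul_X_pow_eq_monomial] at hmd
  rw [MvPolynomial.support_monomial] at hmd
  split at hmd
  · exact absurd hmd (by simp)
  · rw [Finset.mem_singleton] at hmd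
    exact Finset.mem_image.mpr ⟨d, hd, hmd.symm⟩

lemma card_support_toMv_le (j : Fin n) (f : Polynomial F) :
    (toMv j f).support.card ≤ f.support.card := by
  classical
  exact le_trans (Finset.card_le_card (toMv_support_subset j f)) Finset.card_image_le

lemma coordZero_toMv {j j' : Fin n} (h : j ≠ j') (f : Polynomial F) :
    ∀ m ∈ (toMv j f).support, m j' = 0 := by
  intro m hm
  obtain ⟨d, _, rfl⟩ := Finset.mem_image.mp (toMv_support_subset j f hm)
  exact Finsupp.single_eq_of_ne' h

lemma coordZero_mul {p q : MvPolynomial (Fin n) F} {j' : Fin n}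
    (hp : ∀ m ∈ p.support, m j' = 0) (hq : ∀ m ∈ q.support, m j' = 0) :
    ∀ m ∈ (p * q).support, m j' = 0 := by
  classical
  intro m hm
  obtain ⟨a, ha, b, hb, rfl⟩ := Finset.mem_add.mp (MvPolynomial.support_mul p q hm)
  simp [hp a ha, hq b hb]

lemma coordZero_C {j' : Fin n} (c : F) :
    ∀ m ∈ (MvPolynomial.C (σ := Fin n) c).support, m j' = 0 := by
  intro m hm
  rw [MvPolynomial.mem_support_iff, MvPolynomial.coeff_C] at hm
  split at hm
  · rename_i hh; rw [← hh]; rfl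
  · exact absurd rfl hm

lemma coordZero_prod {s : Finset (Fin n)} {f : Fin n → Polynomial F} {j' : Fin n}
    (h : ∀ j ∈ s, j ≠ j') :
    ∀ m ∈ (∏ j ∈ s, toMv j (f j)).support, m j' = 0 := by
  classical
  refine Finset.prod_induction _ (fun p : MvPolynomial (Fin n) F => ∀ m ∈ p.support, m j' = 0)
    (fun p q hp hq => coordZero_mul hp hq) ?_ ?_
  · intro m hm
    rw [MvPolynomial.mem_support_iff, MvPolynomial.coeff_one] at hm
    split at hm
    · rename_i hh; rw [← hh]; rfl
    · exact absurd rfl hm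
  · intro j hj
    exact coordZero_toMv (h j hj) (f j)

lemma toMv_C (j : Fin n) (c : F) : toMv j (Polynomial.C c) = MvPolynomial.C c := by
  rw [toMv, Polynomial.aeval_C, MvPolynomial.algebraMap_eq]

lemma toMv_one (j : Fin n) : toMv j (1 : Polynomial F) = 1 := by
  rw [toMv, map_one]

lemma substPrefix_toMv {t : ℕ} (cvec : Fin n → F) (j : Fin n) (f : Polynomial F) :
    substPrefix t cvec (toMv j f) =
      if (j : ℕ) < t then MvPolynomial.C (Polynomial.eval (cvec j) f) else toMv j f := by
  rw [substPrefix, toMv, ← Polynomial.aeval_algHom_apply, MvPolynomial.aeval_X]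
  by_cases hj : (j : ℕ) < t
  · rw [if_pos hj, if_pos hj, ← MvPolynomial.algebraMap_eq,
      Polynomial.aeval_algebraMap_apply]
    simp [Polynomial.coe_aeval_eq_eval, MvPolynomial.algebraMap_eq]
  · rw [if_neg hj, if_neg hj]

lemma substPrefix_C {t : ℕ} (cvec : Fin n → F) (c : F) :
    substPrefix t cvec (MvPolynomial.C c) = MvPolynomial.C c := by
  rw [substPrefix, MvPolynomial.aeval_C, MvPolynomial.algebraMap_eq]

lemma eval_toMv (cvec : Fin n → F) (j : Fin n) (f : Polynomial F) :
    MvPolynomial.eval cvec (toMv j f) = Polynomial.eval (cvec j) f := by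
  rw [toMv_eq_sum, map_sum, Polynomial.eval_eq_sum, Polynomial.sum_def]
  exact Finset.sum_congr rfl fun d _ => by simp

lemma eval_eval_aeval {m : ℕ} (z : Fin m → F) (G : Fin n → MvPolynomial (Fin m) F)
    (Q : MvPolynomial (Fin n) F) :
    MvPolynomial.eval z (MvPolynomial.aeval G Q)
      = MvPolynomial.eval (fun j => MvPolynomial.eval z (G j)) Q := by
  induction Q using MvPolynomial.induction_on with
  | C a => simp
  | add p q hp hq => simp only [map_add, hp, hq]
  | mul_X p j hp => simp only [map_mul, MvPolynomial.aeval_X, hp, MvPolynomial.eval_X]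

lemma card_support_polyC_le (c : F) : (Polynomial.C c).support.card ≤ 1 := by
  classical
  calc (Polynomial.C c).support.card ≤ ({0} : Finset ℕ).card :=
        Finset.card_le_card (by simpa using Polynomial.support_monomial' 0 c)
  _ = 1 := rfl

lemma minor_exists {g₁ g₂ : Polynomial F} (h₁ : g₁.Monic) (h₂ : g₂.Monic) (hne : g₁ ≠ g₂)
    {D : ℕ} (hD₁ : g₁.natDegree ≤ D) (hD₂ : g₂.natDegree ≤ D) :
    ∃ p q, p ≤ D ∧ q ≤ D ∧ g₁.coeff p * g₂.coeff q - g₁.coeff q * g₂.coeff p ≠ 0 := by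
  by_contra hc
  push_neg at hc
  apply hne
  set n1 := g₁.natDegree with hn1
  set n2 := g₂.natDegree with hn2
  have key : ∀ p, p ≤ D → g₁.coeff p = g₁.coeff n2 * g₂.coeff p := by
    intro p hp
    have h := hc p n2 hp hD₂
    rw [h₂.coeff_natDegree, mul_one] at h
    exact sub_eq_zero.mp h
  have hn12 : n1 = n2 := by
    rcases lt_trichotomy n1 n2 with hlt | heq | hgt
    · exfalso
      have h1 := key n1 hD₁
      rw [h₁.coeff_natDegree] at h1
      have hz : g₁.coeff n2 = 0 := Polynomial.coeff_eq_zero_of_natDegree_lt hlt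
      rw [hz, zero_mul] at h1
      exact one_ne_zero h1
    · exact heq
    · exfalso
      have h1 := key n1 hD₁
      rw [h₁.coeff_natDegree] at h1
      have hz : g₂.coeff n1 = 0 := Polynomial.coeff_eq_zero_of_natDegree_lt hgt
      rw [hz, mul_zero] at h1
      exact one_ne_zero h1
  have hc1 : g₁.coeff n2 = 1 := by
    have h1 := key n1 hD₁
    rw [h₁.coeff_natDegree, hn12] at h1
    rw [h₂.coeff_natDegree] at h1
    rw [mul_one] at h1
    exact h1.symm
  ext p
  by_cases hp : p ≤ D
  · rw [key p hp, hc1, one_mul]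
  · rw [Polynomial.coeff_eq_zero_of_natDegree_lt (by omega),
      Polynomial.coeff_eq_zero_of_natDegree_lt (by omega)]


lemma substPrefix_mul {t : ℕ} (cvec : Fin n → F) (p q : MvPolynomial (Fin n) F) :
    substPrefix t cvec (p * q) = substPrefix t cvec p * substPrefix t cvec q := by
  simp only [substPrefix]; exact map_mul _ _ _

lemma substPrefix_pow {t : ℕ} (cvec : Fin n → F) (p : MvPolynomial (Fin n) F) (d : ℕ) :
    substPrefix t cvec (p ^ d) = substPrefix t cvec p ^ d := by
  simp only [substPrefix]; exact map_pow _ _ _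

lemma substPrefix_sum {t : ℕ} (cvec : Fin n → F) {ι : Type*} (sfin : Finset ι)
    (f : ι → MvPolynomial (Fin n) F) :
    substPrefix t cvec (∑ i ∈ sfin, f i) = ∑ i ∈ sfin, substPrefix t cvec (f i) := by
  simp only [substPrefix]; exact map_sum _ _ _

lemma substPrefix_prod_toMv {t : ℕ} (cvec : Fin n → F) (pr : Finset (Fin n))
    (f : Fin n → Polynomial F) (hpr : ∀ j ∈ pr, (j : ℕ) < t) :
    substPrefix t cvec (∏ j ∈ pr, toMv j (f j))
      = MvPolynomial.C (∏ j ∈ pr, Polynomial.eval (cvec j) (f j)) := by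
  have h1 : substPrefix t cvec (∏ j ∈ pr, toMv j (f j))
      = ∏ j ∈ pr, substPrefix t cvec (toMv j (f j)) := by
    simp only [substPrefix]; exact map_prod _ _ _
  rw [h1, map_prod (MvPolynomial.C : F →+* MvPolynomial (Fin n) F)]
  refine Finset.prod_congr rfl fun j hj => ?_
  rw [substPrefix_toMv, if_pos (hpr j hj)]

lemma eval_prod_toMv (cvec : Fin n → F) (pr : Finset (Fin n)) (f : Fin n → Polynomial F) :
    MvPolynomial.eval cvec (∏ j ∈ pr, toMv j (f j))
      = ∏ j ∈ pr, Polynomial.eval (cvec j) (f j) := by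
  rw [map_prod]
  exact Finset.prod_congr rfl fun j _ => eval_toMv cvec j (f j)

end Aux

/-- Claim 4.1.2. Let `P ≠ 0` be computed by a pseudo-simple minimal low
degree unmixed ΣΠΣΠ(k) circuit of size `s ≥ 2` (`k ≥ 2`) over an infinite field. Let
`G : F^m → F^n` be a polynomial map (given by its component polynomials) which is a
generator both for nonzero polynomials computed by low degree unmixed ΣΠΣΠ(t) circuits of
size `s` with `t ≤ k − 1` and for nonzero low degree `2s`-sparse polynomials. Then
there are `c ∈ Im G` and `0 ≤ t ≤ n − 1` such that `P' = P|_{x 1 = c 1, …, x t = c t}`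
is nonzero and `‖P'‖ ≤ s ^ (5 k² + 2)`. -/



theorem exists_image_point_prefix_sparse
    {F : Type*} [Field F] [Infinite F] {n k s m : ℕ} (hs : 2 ≤ s) (hk : 2 ≤ k) [NeZero k]
    (β : Fin k → F) (hβ : ∀ i, β i ≠ 0)
    (g : Fin k → Fin n → Polynomial F)
    (hmonic : ∀ i j, (g i j).Monic)
    (hsize : ∀ i j, (g i j).support.card ≤ s)
    (Fp : Fin k → MvPolynomial (Fin n) F)
    (hFp : ∀ i, Fp i = MvPolynomial.C (β i) * ∏ j : Fin n, toMv j (g i j))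
    (P : MvPolynomial (Fin n) F) (hP : P = ∑ i, Fp i) (hP0 : P ≠ 0)
    (hlow : P.totalDegree ≤ n)
    (hmin : ∀ A : Finset (Fin k), A.Nonempty → A ≠ Finset.univ → ∑ i ∈ A, Fp i ≠ 0)
    (hps : pseudoGcd g = 1)
    (G : Fin n → MvPolynomial (Fin m) F)
    (hGcirc : ∀ t : ℕ, t ≤ k - 1 → ∀ h : Fin t → Fin n → Polynomial F,
      (∀ i j, (h i j).support.card ≤ s) →
      (∑ i : Fin t, ∏ j : Fin n, toMv j (h i j)).totalDegree ≤ n →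
      (∑ i : Fin t, ∏ j : Fin n, toMv j (h i j)) ≠ 0 →
      MvPolynomial.aeval G (∑ i : Fin t, ∏ j : Fin n, toMv j (h i j)) ≠ 0)
    (hGsparse : ∀ Q : MvPolynomial (Fin n) F, Q ≠ 0 → sparsity Q ≤ 2 * s →
      Q.totalDegree ≤ n → MvPolynomial.aeval G Q ≠ 0) :
    ∃ (y : Fin m → F) (t : ℕ), t ≤ n - 1 ∧
      substPrefix t (fun j => MvPolynomial.eval y (G j)) P ≠ 0 ∧
      sparsity (substPrefix t (fun j => MvPolynomial.eval y (G j)) P)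
        ≤ s ^ (5 * k ^ 2 + 2) := by
  
  classical
  -- Consequence of pseudo-simplicity: a factor shared by all terms at a variable is 1.
  have hps1 : ∀ j : Fin n, (∀ i i' : Fin k, g i j = g i' j) → ∀ i, g i j = 1 := by
    intro j hj i
    have hmem : toMv j (g i j) ∈ commonFactors g := by
      rw [commonFactors, Finset.mem_filter]
      refine ⟨Finset.mem_image.mpr ⟨(i, j), Finset.mem_univ _, rfl⟩, ?_⟩
      intro i'
      exact ⟨j, by rw [hj i' i]⟩
    have hdvd : toMv j (g i j) ∣ 1 := by
      rw [← hps, pseudoGcd]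
      exact Finset.dvd_prod_of_mem _ hmem
    have hunit : IsUnit (toMv j (g i j)) := isUnit_of_dvd_one hdvd
    have hψ : (MvPolynomial.aeval (fun j' : Fin n => if j' = j then Polynomial.X else 1) :
        MvPolynomial (Fin n) F →ₐ[F] Polynomial F) (toMv j (g i j)) = g i j := by
      rw [toMv, ← Polynomial.aeval_algHom_apply, MvPolynomial.aeval_X, if_pos rfl,
        Polynomial.aeval_X_left_apply]
    have hu2 : IsUnit (g i j) := hψ ▸ hunit.map _
    exact ((hmonic i j).natDegree_eq_zero).mp
      (Polynomial.natDegree_eq_zero_of_isUnit hu2)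
  have hpow1 : (1 : ℕ) ≤ s ^ (5 * k ^ 2 + 2) := Nat.one_le_pow _ _ (by omega)
  by_cases hall : ∀ j : Fin n, ∀ i i' : Fin k, g i j = g i' j
  · -- all factors are 1 : P is a constant
    have hPC : P = MvPolynomial.C (∑ i, β i) := by
      rw [hP, map_sum]
      refine Finset.sum_congr rfl fun i _ => ?_
      have hone : ∀ j ∈ (Finset.univ : Finset (Fin n)),
          toMv j (g i j) = (1 : MvPolynomial (Fin n) F) := fun j _ => by
        rw [hps1 j (hall j) i]; exact toMv_one j
      rw [hFp i, Finset.prod_congr rfl hone, Finset.prod_const_one, mul_one]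
    have hsub : substPrefix 0 (fun j => MvPolynomial.eval (fun _ : Fin m => (0:F)) (G j)) P
        = P := by
      rw [substPrefix]
      simp only [Nat.not_lt_zero, if_false]
      exact MvPolynomial.aeval_X_left_apply P
    refine ⟨fun _ => 0, 0, by omega, by rw [hsub]; exact hP0, ?_⟩
    rw [hsub, hPC, sparsity]
    refine le_trans ?_ hpow1
    rw [MvPolynomial.C_apply]
    calc (MvPolynomial.monomial (0 : Fin n →₀ ℕ) (∑ i, β i)).support.card
        ≤ ({(0 : Fin n →₀ ℕ)} : Finset _).card := Finset.card_le_card (by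
          rw [MvPolynomial.support_monomial]; split <;> simp)
      _ = 1 := rfl
  · -- there is a disagreement variable
    push_neg at hall
    obtain ⟨jx, ix, ix', hnex⟩ := hall
    set T : Finset (Fin n) := Finset.univ.filter
        (fun j : Fin n => ¬ ∀ i i' : Fin k, g i j = g i' j) with hT
    have hTne : T.Nonempty := ⟨jx, by
      rw [hT, Finset.mem_filter]
      exact ⟨Finset.mem_univ _, fun hfa => hnex (hfa ix ix')⟩⟩
    set j₀ : Fin n := T.max' hTne with hj₀
    have hj₀T : j₀ ∈ T := T.max'_mem hTne
    have hj₀ne : ¬ ∀ i i' : Fin k, g i j₀ = g i' j₀ := by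
      have h2 := hj₀T; rw [hT, Finset.mem_filter] at h2; exact h2.2
    push_neg at hj₀ne
    obtain ⟨i₁, i₂, hne12⟩ := hj₀ne
    have hbig : ∀ j : Fin n, (j₀ : ℕ) < (j : ℕ) → ∀ i, g i j = 1 := by
      intro j hj i
      apply hps1 j
      by_contra hcj
      have hjT : j ∈ T := by rw [hT, Finset.mem_filter]; exact ⟨Finset.mem_univ _, hcj⟩
      have hle := Fin.le_def.mp (Finset.le_max' T j hjT)
      omega
    set t₀ : ℕ := (j₀ : ℕ) with ht₀
    set pre : Finset (Fin n) := Finset.univ.filter (fun j : Fin n => (j : ℕ) < t₀) with hpre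
    set U : Fin k → MvPolynomial (Fin n) F := fun i => ∏ j ∈ pre, toMv j (g i j) with hU
    set a : Fin k → ℕ → F := fun i d => (g i j₀).coeff d with ha
    set D : ℕ := Finset.univ.sup (fun i : Fin k => (g i j₀).natDegree) with hD
    set Q : ℕ → MvPolynomial (Fin n) F :=
      fun d => ∑ i, MvPolynomial.C (β i * a i d) * U i with hQ
    have hfe : Finset.univ.filter (fun j : Fin n => ¬ (j:ℕ) < t₀)
        = insert j₀ (Finset.univ.filter fun j : Fin n => t₀ < (j:ℕ)) := by
      ext j
      simp only [Finset.mem_filter, Finset.mem_univ, true_and, Finset.mem_insert, Fin.ext_iff]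
      omega
    have hj₀nmem : j₀ ∉ Finset.univ.filter (fun j : Fin n => t₀ < (j:ℕ)) := by
      simp [ht₀]
    have hbig1 : ∀ i, ∀ j ∈ Finset.univ.filter (fun j : Fin n => t₀ < (j:ℕ)),
        toMv j (g i j) = 1 := by
      intro i j hj
      rw [Finset.mem_filter] at hj
      rw [hbig j (by omega) i]
      exact toMv_one j
    have hsplit : ∀ i, ∏ j : Fin n, toMv j (g i j) = U i * toMv j₀ (g i j₀) := by
      intro i
      rw [← Finset.prod_filter_mul_prod_filter_not Finset.univ (fun j : Fin n => (j:ℕ) < t₀)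
        (fun j => toMv j (g i j)), hfe, Finset.prod_insert hj₀nmem,
        Finset.prod_eq_one (hbig1 i), mul_one]
    have hDd : ∀ i, (g i j₀).natDegree < D + 1 := by
      intro i
      have h2 : (fun i : Fin k => (g i j₀).natDegree) i ≤ D := by
        rw [hD]; exact Finset.le_sup (f := fun i : Fin k => (g i j₀).natDegree) (Finset.mem_univ i)
      exact Nat.lt_succ_of_le h2
    have htoMvd : ∀ i, toMv j₀ (g i j₀)
        = ∑ d ∈ Finset.range (D+1), MvPolynomial.C (a i d) * X j₀ ^ d := by
      intro i
      rw [toMv, Polynomial.aeval_eq_sum_range' (hDd i)]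
      exact Finset.sum_congr rfl fun d _ => by rw [MvPolynomial.smul_eq_C_mul]
    have hFpd : ∀ i : Fin k, Fp i = ∑ d ∈ Finset.range (D+1),
        (MvPolynomial.C (β i * a i d) * U i) * X j₀ ^ d := by
      intro i
      rw [hFp i, hsplit i, htoMvd i, Finset.mul_sum, Finset.mul_sum]
      refine Finset.sum_congr rfl fun d _ => ?_
      rw [map_mul]
      ring
    have hPQ : P = ∑ d ∈ Finset.range (D+1), Q d * X j₀ ^ d := by
      rw [hP, Finset.sum_congr rfl fun i (_ : i ∈ Finset.univ) => hFpd i, Finset.sum_comm]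
      refine Finset.sum_congr rfl fun d _ => ?_
      simp only [hQ]
      rw [Finset.sum_mul]
    have hZ : ∀ d, ∀ mm ∈ (Q d).support, mm j₀ = 0 := by
      intro d mm hmm
      simp only [hQ] at hmm
      obtain ⟨i, hi, hmm⟩ := Finset.mem_biUnion.mp (MvPolynomial.support_sum hmm)
      refine coordZero_mul (coordZero_C _) ?_ mm hmm
      simp only [hU]
      refine coordZero_prod ?_
      intro j hj
      simp only [hpre] at hj; rw [Finset.mem_filter] at hj
      intro hjj
      rw [hjj] at hj
      omega
    have hQmem : ∀ d, d ≤ D → ∀ mm ∈ (Q d).support,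
        (mm + Finsupp.single j₀ d) ∈ P.support := by
      intro d hd mm hmm
      have hcm : MvPolynomial.coeff mm (Q d) ≠ 0 := MvPolynomial.mem_support_iff.mp hmm
      rw [MvPolynomial.mem_support_iff, hPQ, MvPolynomial.coeff_sum]
      have hterm : ∀ d' ∈ Finset.range (D+1),
          MvPolynomial.coeff (mm + Finsupp.single j₀ d) (Q d' * X j₀ ^ d')
            = if d' = d then MvPolynomial.coeff mm (Q d) else 0 := by
        intro d' _
        by_cases hdd : d' = d
        · subst hdd
          rw [if_pos rfl, MvPolynomial.X_pow_eq_monomial, MvPolynomial.coeff_mul_monomial,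
            mul_one]
        · rw [if_neg hdd]
          by_contra hc
          have hmem2 : (mm + Finsupp.single j₀ d) ∈ (Q d' * X j₀ ^ d').support :=
            MvPolynomial.mem_support_iff.mpr hc
          obtain ⟨m₁, h1, m₂, h2, heq⟩ :=
            Finset.mem_add.mp (MvPolynomial.support_mul _ _ hmem2)
          have hm₁ : m₁ j₀ = 0 := hZ d' m₁ h1
          have hm₂ : m₂ = Finsupp.single j₀ d' := by
            rw [MvPolynomial.X_pow_eq_monomial, MvPolynomial.support_monomial] at h2
            rw [if_neg one_ne_zero] at h2
            exact Finset.mem_singleton.mp h2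
          have hval := congrArg (fun mz : Fin n →₀ ℕ => mz j₀) heq
          simp only [Finsupp.add_apply, hm₁, hm₂, Finsupp.single_eq_same,
            hZ d mm hmm, zero_add] at hval
          exact hdd hval
      rw [Finset.sum_congr rfl hterm, Finset.sum_ite_eq' (Finset.range (D+1)) d
        (fun _ => MvPolynomial.coeff mm (Q d)), if_pos (Finset.mem_range.mpr (by omega))]
      exact hcm
    have hQdeg : ∀ d, d ≤ D → (Q d).totalDegree ≤ n := by
      intro d hd
      rw [MvPolynomial.totalDegree]
      refine Finset.sup_le fun mm hmm => ?_
      have h1 := MvPolynomial.le_totalDegree (hQmem d hd mm hmm)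
      have h2 : (mm.sum fun _ e => e) ≤ ((mm + Finsupp.single j₀ d).sum fun _ e => e) := by
        rw [Finsupp.sum_add_index (fun _ _ => rfl) (fun _ _ _ _ => rfl)]
        exact Nat.le_add_right _ _
      exact le_trans h2 (le_trans h1 hlow)
    by_cases hWin : ∃ (i : Fin k) (α γ : F) (p q : ℕ), p ≤ D ∧ q ≤ D ∧
        α * a i p + γ * a i q = 0 ∧ α • Q p + γ • Q q ≠ 0
    · -- winning case : build a (k-1)-term circuit and use the generator
      obtain ⟨i, α, γ, p, q, hpD, hqD, hker, hR0⟩ := hWin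
      set R : MvPolynomial (Fin n) F := α • Q p + γ • Q q with hRdef
      set δ : Fin k → F := fun i' => β i' * (α * a i' p + γ * a i' q) with hδ
      have hRsum : R = ∑ i', MvPolynomial.C (δ i') * U i' := by
        rw [hRdef]; simp only [hQ]
        rw [Finset.smul_sum, Finset.smul_sum, ← Finset.sum_add_distrib]
        refine Finset.sum_congr rfl fun i' _ => ?_
        rw [MvPolynomial.smul_eq_C_mul, MvPolynomial.smul_eq_C_mul]; simp only [hδ]
        simp only [map_mul, map_add]
        ring
      have hδi : δ i = 0 := by simp only [hδ, hker, mul_zero]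
      have hk1 : 0 < k := by omega
      set emb : Fin (k-1) → Fin k := fun i' =>
        if (i' : ℕ) < (i : ℕ) then ⟨(i' : ℕ), by have := i'.2; omega⟩
        else ⟨(i' : ℕ) + 1, by have := i'.2; omega⟩ with hemb
      have hembval : ∀ i' : Fin (k-1),
          ((emb i' : Fin k) : ℕ) = if (i' : ℕ) < (i : ℕ) then (i' : ℕ) else (i' : ℕ) + 1 := by
        intro i'
        simp only [hemb]
        split <;> rfl
      have hembne : ∀ i', emb i' ≠ i := by
        intro i' hcon
        have := congrArg Fin.val hcon
        rw [hembval] at this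
        split at this <;> omega
      have hembinj : Function.Injective emb := by
        intro x y hxy
        have := congrArg Fin.val hxy
        rw [hembval, hembval] at this
        apply Fin.ext
        split at this <;> split at this <;> omega
      have himage : Finset.univ.image emb = Finset.univ.erase i := by
        apply Finset.eq_of_subset_of_card_le
        · intro x hx
          obtain ⟨i', _, rfl⟩ := Finset.mem_image.mp hx
          exact Finset.mem_erase.mpr ⟨hembne i', Finset.mem_univ _⟩
        · rw [Finset.card_erase_of_mem (Finset.mem_univ i),
            Finset.card_image_of_injective _ hembinj]
          simp only [Finset.card_univ, Fintype.card_fin]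
          exact le_rfl
      set hh : Fin (k-1) → Fin n → Polynomial F := fun i' j =>
        if (j:ℕ) < t₀ then g (emb i') j
        else if j = j₀ then Polynomial.C (δ (emb i')) else 1 with hhdef
      have hhpre : ∀ i', ∀ j ∈ pre, toMv j (hh i' j) = toMv j (g (emb i') j) := by
        intro i' j hj
        simp only [hpre] at hj; rw [Finset.mem_filter] at hj
        simp only [hhdef, if_pos hj.2]
      have hhpost : ∀ i', ∀ j ∈ Finset.univ.filter (fun j : Fin n => t₀ < (j:ℕ)),
          toMv j (hh i' j) = 1 := by
        intro i' j hj
        rw [Finset.mem_filter] at hj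
        simp only [hhdef]
        have h1 : ¬ (j:ℕ) < t₀ := by omega
        have h2 : j ≠ j₀ := by
          intro hjj; rw [hjj] at hj; omega
        rw [if_neg h1, if_neg h2]
        exact toMv_one j
      have hprodh : ∀ i', ∏ j : Fin n, toMv j (hh i' j)
          = MvPolynomial.C (δ (emb i')) * U (emb i') := by
        intro i'
        rw [← Finset.prod_filter_mul_prod_filter_not Finset.univ (fun j : Fin n => (j:ℕ) < t₀)
          (fun j => toMv j (hh i' j)), hfe, Finset.prod_insert hj₀nmem,
          Finset.prod_eq_one (hhpost i'), mul_one, ← hpre,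
          Finset.prod_congr rfl (hhpre i')]
        have hj₀h : hh i' j₀ = Polynomial.C (δ (emb i')) := by
          simp [hhdef, ← ht₀]
        rw [hj₀h, toMv_C, mul_comm]
      have hcir : (∑ i' : Fin (k-1), ∏ j : Fin n, toMv j (hh i' j)) = R := by
        rw [Finset.sum_congr rfl fun i' (_ : i' ∈ Finset.univ) => hprodh i']
        rw [← Finset.sum_image (f := fun x => MvPolynomial.C (δ x) * U x)
          (fun x _ y _ hxy => hembinj hxy), himage, hRsum,
          ← Finset.add_sum_erase Finset.univ _ (Finset.mem_univ i), hδi]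
        simp
      have hsizes : ∀ i' j, ((hh i' j).support.card ≤ s) := by
        intro i' j
        simp only [hhdef]
        split
        · exact hsize _ _
        · split
          · exact le_trans (card_support_polyC_le _) (by omega)
          · rw [← Polynomial.C_1]
            exact le_trans (card_support_polyC_le _) (by omega)
      have hGR : MvPolynomial.aeval G (∑ i' : Fin (k-1), ∏ j : Fin n, toMv j (hh i' j)) ≠ 0 := by
        refine hGcirc (k-1) (le_refl _) hh hsizes ?_ ?_
        · rw [hcir, hRdef]
          refine le_trans (MvPolynomial.totalDegree_add _ _) (max_le ?_ ?_)
          · exact le_trans (MvPolynomial.totalDegree_smul_le _ _) (hQdeg p hpD)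
          · exact le_trans (MvPolynomial.totalDegree_smul_le _ _) (hQdeg q hqD)
        · rw [hcir]; exact hR0
      rw [hcir] at hGR
      have hor : ∃ ds, ds ≤ D ∧ MvPolynomial.aeval G (Q ds) ≠ 0 := by
        by_contra hc
        push_neg at hc
        apply hGR
        rw [hRdef, map_add, map_smul, map_smul, hc p hpD, hc q hqD, smul_zero, smul_zero,
          add_zero]
      obtain ⟨ds, hdsD, hds⟩ := hor
      have hy : ∃ y : Fin m → F, MvPolynomial.eval y (MvPolynomial.aeval G (Q ds)) ≠ 0 := by
        by_contra hc
        push_neg at hc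
        exact hds (MvPolynomial.funext fun x => by rw [hc x, map_zero])
      obtain ⟨y, hy⟩ := hy
      set cv : Fin n → F := fun j => MvPolynomial.eval y (G j) with hcv
      have hprlt : ∀ j ∈ pre, (j : ℕ) < t₀ := by
        intro j hj
        simp only [hpre] at hj; rw [Finset.mem_filter] at hj
        exact hj.2
      have hevalU : ∀ i0, MvPolynomial.eval cv (U i0)
          = ∏ j ∈ pre, Polynomial.eval (cv j) (g i0 j) := by
        intro i0
        simp only [hU]
        exact eval_prod_toMv cv pre _
      have hsubU : ∀ i0, substPrefix t₀ cv (U i0)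
          = MvPolynomial.C (MvPolynomial.eval cv (U i0)) := by
        intro i0
        rw [hevalU i0]
        simp only [hU]
        exact substPrefix_prod_toMv cv pre _ hprlt
      have hsubQ : ∀ d, substPrefix t₀ cv (Q d)
          = MvPolynomial.C (MvPolynomial.eval cv (Q d)) := by
        intro d
        simp only [hQ]
        rw [substPrefix_sum, map_sum, map_sum]
        refine Finset.sum_congr rfl fun i0 _ => ?_
        have hEQ : MvPolynomial.eval cv (MvPolynomial.C (β i0 * a i0 d) * U i0)
            = (β i0 * a i0 d) * ∏ j ∈ pre, Polynomial.eval (cv j) (g i0 j) := by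
          rw [map_mul, MvPolynomial.eval_C, hevalU i0]
        rw [hEQ, map_mul MvPolynomial.C (β i0 * a i0 d)
            (∏ j ∈ pre, Polynomial.eval (cv j) (g i0 j)),
          substPrefix_mul, substPrefix_C, hsubU i0, hevalU i0]
      have hsubX : substPrefix t₀ cv ((X j₀ : MvPolynomial (Fin n) F)) = X j₀ := by
        rw [substPrefix, MvPolynomial.aeval_X]
        rw [if_neg (by omega)]
      have key2 : substPrefix t₀ cv P
          = ∑ d ∈ Finset.range (D+1),
              MvPolynomial.C (MvPolynomial.eval cv (Q d)) * X j₀ ^ d := by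
        conv_lhs => rw [hPQ]
        rw [substPrefix_sum]
        refine Finset.sum_congr rfl fun d _ => ?_
        rw [substPrefix_mul, substPrefix_pow, hsubX, hsubQ]
      have hne0 : substPrefix t₀ cv P ≠ 0 := by
        have hcoeff : MvPolynomial.coeff (Finsupp.single j₀ ds) (substPrefix t₀ cv P)
            = MvPolynomial.eval cv (Q ds) := by
          rw [key2, MvPolynomial.coeff_sum]
          have hterm : ∀ d ∈ Finset.range (D+1),
              MvPolynomial.coeff (Finsupp.single j₀ ds)
                (MvPolynomial.C (MvPolynomial.eval cv (Q d)) * X j₀ ^ d)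
              = if d = ds then MvPolynomial.eval cv (Q d) else 0 := by
            intro d _
            rw [MvPolynomial.C_mul_X_pow_eq_monomial, MvPolynomial.coeff_monomial]
            congr 1
            simp only [eq_iff_iff]
            exact ⟨fun hh2 => (Finsupp.single_injective j₀ hh2).symm ▸ rfl,
              fun hh2 => by rw [hh2]⟩
          rw [Finset.sum_congr rfl hterm, Finset.sum_ite_eq' (Finset.range (D+1)) ds
            (fun d => MvPolynomial.eval cv (Q d)), if_pos (Finset.mem_range.mpr (by omega))]
        have hvne : MvPolynomial.eval cv (Q ds) ≠ 0 := by
          rw [hcv]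
          rw [← eval_eval_aeval y G (Q ds)]
          exact hy
        intro hzero
        rw [hzero] at hcoeff
        simp only [MvPolynomial.coeff_zero] at hcoeff
        exact hvne hcoeff.symm
      have hsub2 : substPrefix t₀ cv P
          = ∑ i0, MvPolynomial.C (β i0 * MvPolynomial.eval cv (U i0)) * toMv j₀ (g i0 j₀) := by
        rw [hP, substPrefix_sum]
        refine Finset.sum_congr rfl fun i0 _ => ?_
        rw [hFp i0, hsplit i0, substPrefix_mul, substPrefix_mul, substPrefix_C, hsubU i0,
          substPrefix_toMv, if_neg (by omega), ← mul_assoc, ← map_mul]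
      have hsparse : sparsity (substPrefix t₀ cv P) ≤ k * s := by
        rw [sparsity, hsub2]
        refine le_trans (Finset.card_le_card MvPolynomial.support_sum) ?_
        refine le_trans Finset.card_biUnion_le ?_
        refine le_trans (Finset.sum_le_sum fun i0 (_ : i0 ∈ Finset.univ) => ?_)
          (le_of_eq (by rw [Finset.sum_const, Finset.card_univ, Fintype.card_fin,
            smul_eq_mul]))
        show (MvPolynomial.C (β i0 * MvPolynomial.eval cv (U i0)) * toMv j₀ (g i0 j₀)).support.card ≤ s
        rw [← MvPolynomial.smul_eq_C_mul]
        exact le_trans (Finset.card_le_card MvPolynomial.support_smul)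
          (le_trans (card_support_toMv_le _ _) (hsize i0 j₀))
      have hks : k * s ≤ s ^ (5 * k ^ 2 + 2) := by
        calc k * s ≤ s ^ k * s := by
              refine Nat.mul_le_mul_right s ?_
              exact le_trans (Nat.lt_two_pow_self (n := k)).le (Nat.pow_le_pow_left hs k)
          _ = s ^ (k+1) := (pow_succ s k).symm
          _ ≤ s ^ (5 * k ^ 2 + 2) := Nat.pow_le_pow_right (by omega) (by nlinarith)
      exact ⟨y, t₀, by have := j₀.2; omega, hne0, le_trans hsparse hks⟩
    · -- no winning pair : P would be zero, contradiction
      exfalso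
      have hnw : ∀ (i : Fin k) (α γ : F) (p q : ℕ), p ≤ D → q ≤ D →
          α * a i p + γ * a i q = 0 → α • Q p + γ • Q q = 0 := by
        intro i α γ p q hp hq hker
        by_contra hc
        exact hWin ⟨i, α, γ, p, q, hp, hq, hker, hc⟩
      have hminor : ∃ p q, p ≤ D ∧ q ≤ D ∧
          a i₁ p * a i₂ q - a i₁ q * a i₂ p ≠ 0 := by
        simp only [ha]
        exact minor_exists (hmonic i₁ j₀) (hmonic i₂ j₀) hne12
          (Nat.lt_succ_iff.mp (hDd i₁)) (Nat.lt_succ_iff.mp (hDd i₂))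
      obtain ⟨p, q, hpD, hqD, hM⟩ := hminor
      have e1 : a i₁ q • Q p = a i₁ p • Q q := by
        have h1 := hnw i₁ (a i₁ q) (-(a i₁ p)) p q hpD hqD (by ring)
        rw [add_eq_zero_iff_eq_neg] at h1
        rw [h1, neg_smul, neg_neg]
      have e2 : a i₂ q • Q p = a i₂ p • Q q := by
        have h1 := hnw i₂ (a i₂ q) (-(a i₂ p)) p q hpD hqD (by ring)
        rw [add_eq_zero_iff_eq_neg] at h1
        rw [h1, neg_smul, neg_neg]
      have hQp : Q p = 0 := by
        have key : (a i₁ p * a i₂ q - a i₁ q * a i₂ p) • Q p = 0 := by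
          rw [sub_smul, mul_smul, mul_smul, e2, smul_comm (a i₁ q), e1,
            smul_comm (a i₁ p)]
          exact sub_self _
        rcases smul_eq_zero.mp key with h | h
        · exact absurd h hM
        · exact h
      have hQq : Q q = 0 := by
        have key : (a i₁ p * a i₂ q - a i₁ q * a i₂ p) • Q q = 0 := by
          rw [sub_smul, mul_comm (a i₁ p) (a i₂ q), mul_smul, mul_smul, ← e1,
            smul_comm (a i₂ q) (a i₁ q), e2]
          exact sub_self _
        rcases smul_eq_zero.mp key with h | h
        · exact absurd h hM
        · exact h
      have hQd : ∀ d, d ≤ D → Q d = 0 := by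
        intro d hd
        have h1 := hnw i₁ (a i₁ p) (-(a i₁ d)) d p hd hpD (by ring)
        rw [add_eq_zero_iff_eq_neg, neg_smul, neg_neg, hQp, smul_zero] at h1
        have h2 := hnw i₁ (a i₁ q) (-(a i₁ d)) d q hd hqD (by ring)
        rw [add_eq_zero_iff_eq_neg, neg_smul, neg_neg, hQq, smul_zero] at h2
        have hone : a i₁ p ≠ 0 ∨ a i₁ q ≠ 0 := by
          by_contra hcc
          push_neg at hcc
          rw [hcc.1, hcc.2] at hM
          simp at hM
        rcases hone with h | h
        · rcases smul_eq_zero.mp h1 with h' | h'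
          · exact absurd h' h
          · exact h'
        · rcases smul_eq_zero.mp h2 with h' | h'
          · exact absurd h' h
          · exact h'
      apply hP0
      rw [hPQ]
      refine Finset.sum_eq_zero fun d hd => ?_
      rw [hQd d (by rw [Finset.mem_range] at hd; omega), zero_mul]
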